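/- For all j, k, l ∈ 𝒵_L with j₃ ≠ 0 and k₃ ≠ 0, and all r, s ∈ {−1,+1}: |B_{jkl}^{rs0}| ≤ √5 |M| (|k'| + |j'| |k₃| / |j₃|). -/

import Mathlib

noncomputable section
open scoped Classical

abbrev V3 := Fin 3 → ℝ

/-- Euclidean norm of a vector in ℝ³. -/
def enorm3 (k : V3) : ℝ := Real.sqrt (k 0 ^ 2 + k 1 ^ 2 + k 2 ^ 2)

/-- Horizontal part k' = (k₁, k₂, 0). -/
def horiz (k : V3) : V3 := ![k 0, k 1, 0]

/-- The lattice 𝒵_L of wavevectors. -/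
def ZL (L₁ L₂ L₃ : ℝ) : Set V3 :=
  {k | ∃ n : Fin 3 → ℤ,
    k = ![2 * Real.pi * (n 0 : ℝ) / L₁, 2 * Real.pi * (n 1 : ℝ) / L₂,
          2 * Real.pi * (n 2 : ℝ) / L₃]}

/-- Inertia–gravity frequency ω_k^s = s|k|/k₃. -/
def omg (k : V3) (s : ℝ) : ℝ := s * enorm3 k / k 2

/-- Slow eigenvector X_k^0. -/
def X0 (k : V3) : Fin 3 → ℂ :=
  if horiz k = 0 then ![0, 0, ((Real.sign (k 2) : ℝ) : ℂ)]
  else ![((k 1 / enorm3 k : ℝ) : ℂ), ((-(k 0) / enorm3 k : ℝ) : ℂ), ((k 2 / enorm3 k : ℝ) : ℂ)]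

/-- Fast eigenvectors X_k^s, s = ±1. -/
def Xs (k : V3) (s : ℝ) : Fin 3 → ℂ :=
  if horiz k = 0 then
    ![(((Real.sqrt 2)⁻¹ : ℝ) : ℂ), -Complex.I * s * (((Real.sqrt 2)⁻¹ : ℝ) : ℂ), 0]
  else
    ![(((-(k 1) * k 2 : ℝ) : ℂ) + Complex.I * s * k 0 * enorm3 k) /
        ((Real.sqrt 2 * enorm3 (horiz k) * enorm3 k : ℝ) : ℂ),
      (((k 0 * k 2 : ℝ) : ℂ) + Complex.I * s * k 1 * enorm3 k) /
        ((Real.sqrt 2 * enorm3 (horiz k) * enorm3 k : ℝ) : ℂ),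
      ((enorm3 (horiz k) ^ 2 : ℝ) : ℂ) /
        ((Real.sqrt 2 * enorm3 (horiz k) * enorm3 k : ℝ) : ℂ)]

/-- The incompressible-velocity vector V X_j^r. -/
def VX (j : V3) (r : ℝ) : Fin 3 → ℂ :=
  if horiz j = 0 then Xs j r
  else
    ![(((-(j 1) * j 2 : ℝ) : ℂ) + Complex.I * r * j 0 * enorm3 j) /
        ((Real.sqrt 2 * enorm3 j * enorm3 (horiz j) : ℝ) : ℂ),
      (((j 0 * j 2 : ℝ) : ℂ) + Complex.I * r * j 1 * enorm3 j) /
        ((Real.sqrt 2 * enorm3 j * enorm3 (horiz j) : ℝ) : ℂ),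
      (-Complex.I * r * ((enorm3 (horiz j) ^ 2 * enorm3 j / j 2 : ℝ) : ℂ)) /
        ((Real.sqrt 2 * enorm3 j * enorm3 (horiz j) : ℝ) : ℂ)]

/-- Bilinear pairing a·b on ℂ³. -/
def dotC (a b : Fin 3 → ℂ) : ℂ := a 0 * b 0 + a 1 * b 1 + a 2 * b 2

/-- Pairing of a complex vector with a real vector. -/
def dotR (a : Fin 3 → ℂ) (k : V3) : ℂ :=
  a 0 * (k 0 : ℂ) + a 1 * (k 1 : ℂ) + a 2 * (k 2 : ℂ)

/-- The interaction coefficient B_{jkl}^{rs0}. -/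
def Brs0 (M : ℝ) (j k l : V3) (r s : ℝ) : ℂ :=
  if j + k = l ∧ j 2 * k 2 ≠ 0 ∧ l ≠ 0 then
    Complex.I * M * dotR (VX j r) k * dotC (Xs k s) (X0 l)
  else 0

/-!
Up to the factor `i |M|`, the coefficient is the product of the pairings `V X_j^r · k` and
`X_k^s · X_l^0`. The fast eigenvector `X_k^s` is a unit vector and `X_l^0` has length at most one,
so the second pairing has modulus at most one. For `j' ≠ 0`,
`√2 |j| |j'| (V X_j^r · k) = j₃ (j' ∧ k') + i r |j| (j' · k' - |j'|² k₃ / j₃)`,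
and the Lagrange identity `(j' ∧ k')² + (j' · k')² = |j'|² |k'|²` together with `j₃² ≤ |j|²` bounds
its modulus by `√(|k'|² + |j'|² k₃² / j₃²) ≤ |k'| + |j'| |k₃| / |j₃|`.
-/

open Complex

lemma enorm3_nonneg (k : V3) : 0 ≤ enorm3 k := Real.sqrt_nonneg _

lemma enorm3_sq (k : V3) : enorm3 k ^ 2 = k 0 ^ 2 + k 1 ^ 2 + k 2 ^ 2 :=
  Real.sq_sqrt (by positivity)

lemma enorm3_horiz_sq (k : V3) : enorm3 (horiz k) ^ 2 = k 0 ^ 2 + k 1 ^ 2 := by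
  simp [enorm3, horiz, Real.sq_sqrt, add_nonneg, sq_nonneg]

lemma horiz_eq_zero_iff {k : V3} : horiz k = 0 ↔ k 0 = 0 ∧ k 1 = 0 := by
  simp [horiz, funext_iff, Fin.forall_fin_succ]

lemma enorm3_horiz_pos {k : V3} (h : horiz k ≠ 0) : 0 < enorm3 (horiz k) := by
  obtain h0 | h1 : k 0 ≠ 0 ∨ k 1 ≠ 0 := by rw [Ne, horiz_eq_zero_iff] at h; tauto
  all_goals exact Real.sqrt_pos.mpr (by simp [horiz]; positivity)

lemma enorm3_horiz_le (k : V3) : enorm3 (horiz k) ≤ enorm3 k :=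
  Real.sqrt_le_sqrt (by simp [horiz]; positivity)

lemma sq_norm_ofReal_add_I_mul (x y : ℝ) : ‖(x : ℂ) + I * y‖ ^ 2 = x ^ 2 + y ^ 2 := by
  rw [mul_comm, Complex.sq_norm, normSq_add_mul_I]

lemma norm_ofReal_add_I_mul_div_le {x y d c : ℝ} (hd : 0 < d) (hc : 0 ≤ c)
    (h : x ^ 2 + y ^ 2 ≤ (c * d) ^ 2) : ‖((x : ℂ) + I * y) / d‖ ≤ c := by
  rw [norm_div, norm_real, Real.norm_of_nonneg hd.le, div_le_iff₀ hd,
    ← pow_le_pow_iff_left₀ (norm_nonneg _) (by positivity) two_ne_zero, sq_norm_ofReal_add_I_mul]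
  exact h

lemma norm_dotC_le_one {a b : Fin 3 → ℂ} (ha : ‖a 0‖ ^ 2 + ‖a 1‖ ^ 2 + ‖a 2‖ ^ 2 ≤ 1)
    (hb : ‖b 0‖ ^ 2 + ‖b 1‖ ^ 2 + ‖b 2‖ ^ 2 ≤ 1) : ‖dotC a b‖ ≤ 1 := by
  have htri : ‖dotC a b‖ ≤ ‖a 0‖ * ‖b 0‖ + ‖a 1‖ * ‖b 1‖ + ‖a 2‖ * ‖b 2‖ := by
    simp only [dotC, ← norm_mul]
    exact norm_add₃_le
  nlinarith [sq_nonneg (‖a 0‖ - ‖b 0‖), sq_nonneg (‖a 1‖ - ‖b 1‖), sq_nonneg (‖a 2‖ - ‖b 2‖)]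

lemma sum_sq_norm_Xs (k : V3) {s : ℝ} (hs : s ^ 2 = 1) :
    ‖Xs k s 0‖ ^ 2 + ‖Xs k s 1‖ ^ 2 + ‖Xs k s 2‖ ^ 2 = 1 := by
  unfold Xs
  split_ifs with hk
  · simp [mul_pow, hs]
    norm_num
  · have hkh := enorm3_horiz_pos hk
    have hke := hkh.trans_le (enorm3_horiz_le k)
    simp only [Matrix.cons_val_zero, Matrix.cons_val_one, Matrix.cons_val_two, Matrix.head_cons,
      Matrix.tail_cons, norm_div, div_pow, Complex.norm_real, Real.norm_eq_abs, sq_abs,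
      mul_assoc, ← ofReal_mul, sq_norm_ofReal_add_I_mul, ← add_div]
    rw [div_eq_one_iff_eq (by positivity : (√2 * (enorm3 (horiz k) * enorm3 k)) ^ 2 ≠ 0)]
    linear_combination (k 0 ^ 2 + k 1 ^ 2) * enorm3 k ^ 2 * hs
      - enorm3 (horiz k) ^ 2 * enorm3 k ^ 2 * Real.sq_sqrt (zero_le_two (α := ℝ))
      + (enorm3 (horiz k) ^ 2 - k 2 ^ 2 - enorm3 k ^ 2) * enorm3_horiz_sq k
      - enorm3 (horiz k) ^ 2 * enorm3_sq k

lemma sum_sq_norm_X0_le_one (l : V3) : ‖X0 l 0‖ ^ 2 + ‖X0 l 1‖ ^ 2 + ‖X0 l 2‖ ^ 2 ≤ 1 := by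
  unfold X0
  split_ifs with hl
  · rcases Real.sign_apply_eq (l 2) with h | h | h <;> simp [h]
  · have hl' := (enorm3_horiz_pos hl).trans_le (enorm3_horiz_le l)
    simp only [Matrix.cons_val_zero, Matrix.cons_val_one, Matrix.cons_val_two, Matrix.head_cons,
      Matrix.tail_cons, norm_real, Real.norm_eq_abs, sq_abs, div_pow, ← add_div]
    rw [div_le_one (by positivity), enorm3_sq]
    linarith

lemma dotR_VX_of_horiz_ne_zero {j : V3} (hj : horiz j ≠ 0) (r : ℝ) (k : V3) :
    dotR (VX j r) k =
      ((j 2 * (j 0 * k 1 - j 1 * k 0) : ℝ) +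
        I * (r * enorm3 j * (j 0 * k 0 + j 1 * k 1 - enorm3 (horiz j) ^ 2 * k 2 / j 2) : ℝ)) /
      (√2 * enorm3 j * enorm3 (horiz j) : ℝ) := by
  simp only [dotR, VX, if_neg hj, Matrix.cons_val_zero, Matrix.cons_val_one, Matrix.cons_val_two,
    Matrix.head_cons, Matrix.tail_cons]
  push_cast
  ring

lemma norm_dotR_VX_le {j : V3} {r : ℝ} (hr : r ^ 2 = 1) (k : V3) :
    ‖dotR (VX j r) k‖ ≤ enorm3 (horiz k) + enorm3 (horiz j) * |k 2| / |j 2| := by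
  have hb : 0 ≤ enorm3 (horiz j) * |k 2| / |j 2| := by
    have := enorm3_nonneg (horiz j)
    positivity
  have hsqrt2 := Real.sq_sqrt (zero_le_two (α := ℝ))
  by_cases hj : horiz j = 0
  · have hform :
        dotR (VX j r) k = (((k 0 : ℝ) : ℂ) + I * ((-(r * k 1) : ℝ) : ℂ)) / ((√2 : ℝ) : ℂ) := by
      simp only [dotR, VX, Xs, if_pos hj, Matrix.cons_val_zero, Matrix.cons_val_one,
        Matrix.cons_val_two, Matrix.head_cons, Matrix.tail_cons]
      push_cast
      ring
    refine le_add_of_le_of_nonneg ?_ hb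
    rw [hform]
    refine norm_ofReal_add_I_mul_div_le (by norm_num) (enorm3_nonneg _) ?_
    rw [mul_pow, hsqrt2, enorm3_horiz_sq, neg_sq, mul_pow, hr]
    nlinarith [sq_nonneg (k 0), sq_nonneg (k 1)]
  set h := enorm3 (horiz j)
  set e := enorm3 j
  set a := enorm3 (horiz k)
  set b := h * |k 2| / |j 2|
  set w := j 0 * k 1 - j 1 * k 0
  set p := j 0 * k 0 + j 1 * k 1
  set q := h ^ 2 * k 2 / j 2
  have hh : 0 < h := enorm3_horiz_pos hj
  have he : 0 < e := hh.trans_le (enorm3_horiz_le j)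
  have hq : q ^ 2 = h ^ 2 * b ^ 2 := by
    simp only [q, b, div_pow, mul_pow, sq_abs]
    ring
  have hlagrange : w ^ 2 + p ^ 2 = h ^ 2 * a ^ 2 := by
    rw [enorm3_horiz_sq, enorm3_horiz_sq]
    ring
  have hj2e : j 2 ^ 2 ≤ e ^ 2 := by
    rw [enorm3_sq]
    nlinarith [sq_nonneg (j 0), sq_nonneg (j 1)]
  rw [dotR_VX_of_horiz_ne_zero hj]
  refine norm_ofReal_add_I_mul_div_le (by positivity) (add_nonneg (enorm3_nonneg _) hb) ?_
  calc (j 2 * w) ^ 2 + (r * e * (p - q)) ^ 2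
      = j 2 ^ 2 * w ^ 2 + e ^ 2 * (p - q) ^ 2 := by linear_combination (e * (p - q)) ^ 2 * hr
    _ ≤ 2 * e ^ 2 * (w ^ 2 + p ^ 2 + q ^ 2) := by
        nlinarith [mul_le_mul_of_nonneg_right hj2e (sq_nonneg w),
          mul_nonneg (sq_nonneg e) (sq_nonneg (p + q))]
    _ = 2 * e ^ 2 * h ^ 2 * (a ^ 2 + b ^ 2) := by linear_combination 2 * e ^ 2 * (hlagrange + hq)
    _ ≤ ((a + b) * (√2 * e * h)) ^ 2 := by
        rw [mul_pow, mul_pow, mul_pow, hsqrt2]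
        have hab : 0 ≤ a * b := mul_nonneg (enorm3_nonneg _) hb
        nlinarith [mul_nonneg hab (mul_nonneg (sq_nonneg e) (sq_nonneg h))]

lemma norm_Brs0_le (M : ℝ) (j k l : V3) {r s : ℝ} (hr : r ^ 2 = 1) (hs : s ^ 2 = 1) :
    ‖Brs0 M j k l r s‖ ≤ |M| * (enorm3 (horiz k) + enorm3 (horiz j) * |k 2| / |j 2|) := by
  have hP : 0 ≤ enorm3 (horiz k) + enorm3 (horiz j) * |k 2| / |j 2| := by
    have := enorm3_nonneg (horiz k)
    have := enorm3_nonneg (horiz j)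
    positivity
  unfold Brs0
  split_ifs
  · rw [norm_mul, norm_mul, norm_mul, norm_I, norm_real, Real.norm_eq_abs, one_mul]
    calc |M| * ‖dotR (VX j r) k‖ * ‖dotC (Xs k s) (X0 l)‖
        ≤ |M| * (enorm3 (horiz k) + enorm3 (horiz j) * |k 2| / |j 2|) * 1 := by
          gcongr
          · exact norm_dotR_VX_le hr k
          · exact norm_dotC_le_one (sum_sq_norm_Xs k hs).le (sum_sq_norm_X0_le_one l)
      _ = _ := mul_one _
  · rw [norm_zero]
    exact mul_nonneg (abs_nonneg M) hP

theorem Brs0_bound_general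
    (L₁ L₂ L₃ : ℝ) (hL₁ : 0 < L₁) (hL₂ : 0 < L₂) (hL₃ : 0 < L₃)
    (j k l : V3) (r s : ℝ) (hr : r = 1 ∨ r = -1) (hs : s = 1 ∨ s = -1) :
    ‖Brs0 (L₁ * L₂ * L₃) j k l r s‖ ≤
      Real.sqrt 5 * (L₁ * L₂ * L₃) * (enorm3 (horiz k) + enorm3 (horiz j) * |k 2| / |j 2|) := by
  have hM : 0 < L₁ * L₂ * L₃ := by positivity
  have h5 : 1 ≤ Real.sqrt 5 := Real.one_le_sqrt.mpr (by norm_num)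
  have hB := norm_Brs0_le (L₁ * L₂ * L₃) j k l (sq_eq_one_iff.mpr hr) (sq_eq_one_iff.mpr hs)
  calc ‖Brs0 (L₁ * L₂ * L₃) j k l r s‖
      ≤ |L₁ * L₂ * L₃| * (enorm3 (horiz k) + enorm3 (horiz j) * |k 2| / |j 2|) := hB
    _ ≤ Real.sqrt 5 * (|L₁ * L₂ * L₃| * (enorm3 (horiz k) + enorm3 (horiz j) * |k 2| / |j 2|)) :=
        le_mul_of_one_le_left ((norm_nonneg _).trans hB) h5
    _ = _ := by rw [abs_of_pos hM]; ring

/-- the uniform bound (2.40) on B_{jkl}^{rs0}. -/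
theorem Brs0_bound
    (L₁ L₂ L₃ : ℝ) (hL₁ : 0 < L₁) (hL₂ : 0 < L₂) (hL₃ : 0 < L₃)
    (j k l : V3) (hj : j ∈ ZL L₁ L₂ L₃) (hk : k ∈ ZL L₁ L₂ L₃) (hl : l ∈ ZL L₁ L₂ L₃)
    (hj3 : j 2 ≠ 0) (hk3 : k 2 ≠ 0)
    (r s : ℝ) (hr : r = 1 ∨ r = -1) (hs : s = 1 ∨ s = -1) :
    ‖Brs0 (L₁ * L₂ * L₃) j k l r s‖ ≤
      Real.sqrt 5 * (L₁ * L₂ * L₃) * (enorm3 (horiz k) + enorm3 (horiz j) * |k 2| / |j 2|) :=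
  Brs0_bound_general L₁ L₂ L₃ hL₁ hL₂ hL₃ j k l r s hr hs
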